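/- arXiv:2011.13430 — 3 statements merged into one kernel-verified Lean document; each statement's English description precedes it below -/
import Mathlib

section
/- (Excision, Lemma 2.) Let X be a finite set with a finite family (d_i)_{i ∈ I} of extended pseudo-metrics, and let D be the wedge ep-metric: D(x,y) = inf over all finite chains x = x₀, …, x_n = y and indices i₁, …, i_n ∈ I of Σ_{j=1}^{n} d_{i_j}(x_{j-1}, x_j). Then for every s ∈ [0,∞], the equivalence relation on X generated by the relation {(x,y) : d_i(x,y) ≤ s for some i ∈ I} coincides with the equivalence relation on X generated by the relation {(x,y) : D(x,y) ≤ s}. (Equivalently, the canonical map ∨_i V(X,d_i) → V(X,D) induces a bijection on path components π₀ in each section s.) -/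
open scoped ENNReal

/-- `d` is an extended pseudo-metric on `X`: it takes values in `[0,∞]`,
vanishes on the diagonal, is symmetric, and satisfies the triangle inequality. -/
structure IsEPMetric {X : Type*} (d : X → X → ℝ≥0∞) : Prop where
  refl : ∀ x, d x x = 0
  symm : ∀ x y, d x y = d y x
  triangle : ∀ x y z, d x z ≤ d x y + d y z

/-- The set of costs `Σ_{j=1}^{n} d_{i_j}(x_{j-1}, x_j)` of finite chains
`x = x₀, x₁, …, x_n = y` together with choices of indices `i₁, …, i_n`. -/
def chainCosts {X I : Type*} (d : I → X → X → ℝ≥0∞) (x y : X) : Set ℝ≥0∞ :=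
  { c | ∃ (n : ℕ) (p : Fin (n + 1) → X) (ix : Fin n → I),
      p 0 = x ∧ p (Fin.last n) = y ∧
      c = ∑ j : Fin n, d (ix j) (p j.castSucc) (p j.succ) }

/-- The wedge ep-metric `D` of a family of ep-metrics: the infimum of the
costs of all finite chains from `x` to `y`. -/
noncomputable def wedgeDist {X I : Type*} (d : I → X → X → ℝ≥0∞) (x y : X) : ℝ≥0∞ :=
  sInf (chainCosts d x y)

/-!
One-step chains give `D ≤ d_i`, so the left relation is contained in the right one. Conversely,
for `s < ∞` finiteness of `X` and `I` yields a gap: all values `d_i(a, b)` exceeding `s` are at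
least some `t > s`. A chain from `x` to `y` in different classes of the left relation has a step
between different classes, which costs more than `s` for every `i`, hence at least `t`; so
`D(x, y) ≥ t > s`.
-/

open Relation

theorem wedgeDist_le {X I : Type*} (d : I → X → X → ℝ≥0∞) (i : I) (x y : X) :
    wedgeDist d x y ≤ d i x y :=
  sInf_le ⟨1, ![x, y], fun _ => i, rfl, rfl, by simp⟩

theorem rel_zero_last_of_forall_rel_succ {X : Type*} {R : X → X → Prop} [Std.Refl R]
    [IsTrans X R] {n : ℕ} (p : Fin (n + 1) → X)
    (h : ∀ j : Fin n, R (p j.castSucc) (p j.succ)) :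
    R (p 0) (p (Fin.last n)) := by
  suffices ∀ k : Fin (n + 1), R (p 0) (p k) from this _
  intro k
  induction k using Fin.induction with
  | zero => exact refl _
  | succ j ih => exact _root_.trans ih (h j)

theorem le_wedgeDist_of_not_eqvGen {X I : Type*} (d : I → X → X → ℝ≥0∞)
    {r : X → X → Prop} {t : ℝ≥0∞} (ht : ∀ i a b, ¬EqvGen r a b → t ≤ d i a b) {x y : X}
    (hxy : ¬EqvGen r x y) :
    t ≤ wedgeDist d x y := by
  refine le_sInf ?_
  rintro c ⟨n, p, ix, rfl, rfl, rfl⟩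
  obtain ⟨j, hj⟩ : ∃ j : Fin n, ¬EqvGen r (p j.castSucc) (p j.succ) := by
    by_contra! hall
    exact hxy (rel_zero_last_of_forall_rel_succ p hall)
  calc t ≤ d (ix j) (p j.castSucc) (p j.succ) := ht _ _ _ hj
    _ ≤ ∑ k : Fin n, d (ix k) (p k.castSucc) (p k.succ) :=
      Finset.single_le_sum (f := fun k => d (ix k) (p k.castSucc) (p k.succ))
        (fun _ _ => zero_le) (Finset.mem_univ j)

theorem exists_gt_forall_le_of_gt {ι α : Type*} [Finite ι] [LinearOrder α] [OrderTop α]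
    (f : ι → α) {s : α} (hs : s < ⊤) : ∃ t, s < t ∧ ∀ k, s < f k → t ≤ f k := by
  have := Fintype.ofFinite ι
  classical
  refine ⟨(Finset.univ.filter (s < f ·)).inf f, (Finset.lt_inf_iff hs).2 ?_, ?_⟩
  · simp
  · exact fun k hk => Finset.inf_le (by simpa using hk)

theorem eqvGen_of_wedgeDist_le {X I : Type*} [Finite X] [Finite I] [Nonempty I]
    (d : I → X → X → ℝ≥0∞) {s : ℝ≥0∞} {x y : X} (h : wedgeDist d x y ≤ s) :
    EqvGen (fun x y => ∃ i : I, d i x y ≤ s) x y := by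
  rcases eq_or_ne s ⊤ with rfl | hs
  · exact .rel _ _ ⟨Classical.arbitrary I, le_top⟩
  obtain ⟨t, hst, ht⟩ :=
    exists_gt_forall_le_of_gt (fun q : I × X × X => d q.1 q.2.1 q.2.2) hs.lt_top
  have hcross : ∀ i a b, ¬EqvGen (fun x y => ∃ i : I, d i x y ≤ s) a b → t ≤ d i a b :=
    fun i a b hab => ht (i, a, b) (not_le.1 fun hle => hab (.rel _ _ ⟨i, hle⟩))
  by_contra hxy
  exact (hst.trans_le (le_wedgeDist_of_not_eqvGen d hcross hxy)).not_ge h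

theorem excision_general {X I : Type*} [Finite X] [Finite I] [Nonempty I]
    (d : I → X → X → ℝ≥0∞) (s : ℝ≥0∞) :
    Relation.EqvGen (fun x y => ∃ i : I, d i x y ≤ s) =
      Relation.EqvGen (fun x y => wedgeDist d x y ≤ s) := by
  exact le_antisymm (EqvGen.eqvGen_mono fun a b ⟨i, hi⟩ => (wedgeDist_le d i a b).trans hi)
      (EqvGen.eqvGen_le fun _ _ => eqvGen_of_wedgeDist_le d)

/-- Excision (Lemma 2): for a finite set `X` with a finite (nonempty) family of
ep-metrics `d_i` and wedge ep-metric `D`, for every `s ∈ [0,∞]` the equivalence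
relation generated by `{(x,y) : d_i(x,y) ≤ s for some i}` coincides with the
equivalence relation generated by `{(x,y) : D(x,y) ≤ s}`.  (Equivalently, the
canonical map `∨_i V(X,d_i) → V(X,D)` induces a bijection on path components
`π₀` in each section `s`.) -/
theorem excision {X I : Type*} [Finite X] [Finite I] [Nonempty I]
    (d : I → X → X → ℝ≥0∞) (hd : ∀ i, IsEPMetric (d i)) (s : ℝ≥0∞) :
    Relation.EqvGen (fun x y => ∃ i : I, d i x y ≤ s) =
      Relation.EqvGen (fun x y => wedgeDist d x y ≤ s) :=
  excision_general d s
end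

section
/- (Proposition 8, lower-triangle homotopy.) Let (X,d_X) and (Y,d_Y) be metric spaces and i : X → Y an injection with d_Y(i(x), i(x')) ≤ d_X(x,x') for all x, x' ∈ X. Let m ≥ 1 satisfy d_X(x,x') ≤ m · d_Y(i(x), i(x')) for all x, x' ∈ X, let r > 0, and let θ : Y → X satisfy θ(i(x)) = x for all x ∈ X and d_Y(y, i(θ(y))) < r for all y ∈ Y. Then for every s ∈ [0,∞) and every subset σ ⊆ Y with d_Y(u,v) ≤ s for all u, v ∈ σ, the set σ ∪ i(θ(σ)) ⊆ Y satisfies d_Y(u,v) ≤ m·(s + 2r) for all u, v ∈ σ ∪ i(θ(σ)). (The inclusions σ ⊆ σ ∪ i(θ(σ)) ⊇ i(θ(σ)) in P_{m(s+2r)}(Y,d_Y) give the homotopy, rel P_s(X,d_X), between i∘θ and the canonical map P_s(Y,d_Y) → P_{m(s+2r)}(Y,d_Y).) -/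
/-! Every point of `σ ∪ i(θ(σ))` lies within `r` of a point of `σ`, since `i ∘ θ` moves points by
less than `r`; two such points are therefore at distance at most `r + s + r` by the triangle
inequality, and `m ≥ 1` absorbs the rest. -/

theorem dist_le_add_two_mul_of_forall_exists_dist_le {α : Type*} [PseudoMetricSpace α]
    {σ t : Set α} {s r : ℝ} (hσ : ∀ u ∈ σ, ∀ v ∈ σ, dist u v ≤ s)
    (ht : ∀ w ∈ t, ∃ w' ∈ σ, dist w w' ≤ r) :
    ∀ u ∈ t, ∀ v ∈ t, dist u v ≤ s + 2 * r := by
  intro u hu v hv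
  obtain ⟨u', hu', huu'⟩ := ht u hu
  obtain ⟨v', hv', hvv'⟩ := ht v hv
  have hu'v' := hσ u' hu' v' hv'
  calc dist u v ≤ dist u u' + dist u' v' + dist v' v := dist_triangle4 u u' v' v
    _ ≤ r + s + r := by rw [dist_comm v' v]; linarith
    _ = s + 2 * r := by ring

theorem exists_dist_le_of_mem_union_image {α : Type*} [PseudoMetricSpace α] {σ : Set α}
    {f : α → α} {r : ℝ} (hr : 0 ≤ r) (hf : ∀ y, dist y (f y) ≤ r) :
    ∀ w ∈ σ ∪ f '' σ, ∃ w' ∈ σ, dist w w' ≤ r := by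
  rintro w (hw | ⟨w', hw', rfl⟩)
  · exact ⟨w, hw, by rwa [dist_self]⟩
  · exact ⟨w', hw', by rw [dist_comm]; exact hf w'⟩

theorem rips_lower_triangle_homotopy_general {X Y : Type*} [MetricSpace Y]
    (i : X → Y)
    (m : ℝ) (hm1 : 1 ≤ m)
    (r : ℝ)
    (θ : Y → X)
    (hθr : ∀ y : Y, dist y (i (θ y)) < r) :
    ∀ s : ℝ, 0 ≤ s → ∀ σ : Set Y, (∀ u ∈ σ, ∀ v ∈ σ, dist u v ≤ s) →
      ∀ u ∈ σ ∪ i '' (θ '' σ), ∀ v ∈ σ ∪ i '' (θ '' σ),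
        dist u v ≤ m * (s + 2 * r) := by
  intro s hs σ hσ u hu v hv
  have hr : 0 ≤ r := dist_nonneg.trans (hθr u).le
  rw [Set.image_image] at hu hv
  have hnear := exists_dist_le_of_mem_union_image (σ := σ) (f := fun y => i (θ y)) hr
    fun y => (hθr y).le
  calc dist u v ≤ s + 2 * r := dist_le_add_two_mul_of_forall_exists_dist_le hσ hnear u hu v hv
    _ ≤ m * (s + 2 * r) := le_mul_of_one_le_left (by positivity) hm1

/-- Proposition 8, lower-triangle homotopy: under the hypotheses of
Proposition 8, for every `s ∈ [0,∞)` and every subset `σ ⊆ Y` with pairwise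
distances `≤ s`, the set `σ ∪ i(θ(σ)) ⊆ Y` has pairwise distances
`≤ m·(s + 2r)`.  (The inclusions `σ ⊆ σ ∪ i(θ(σ)) ⊇ i(θ(σ))` in
`P_{m(s+2r)}(Y,d_Y)` give the homotopy, rel `P_s(X,d_X)`, between `i ∘ θ` and
the canonical map `P_s(Y,d_Y) → P_{m(s+2r)}(Y,d_Y)`.) -/
theorem rips_lower_triangle_homotopy {X Y : Type*} [MetricSpace X] [MetricSpace Y]
    (i : X → Y) (hi : Function.Injective i)
    (hcomp : ∀ x x' : X, dist (i x) (i x') ≤ dist x x')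
    (m : ℝ) (hm1 : 1 ≤ m)
    (hm : ∀ x x' : X, dist x x' ≤ m * dist (i x) (i x'))
    (r : ℝ) (hr : 0 < r)
    (θ : Y → X) (hθi : ∀ x : X, θ (i x) = x)
    (hθr : ∀ y : Y, dist y (i (θ y)) < r) :
    ∀ s : ℝ, 0 ≤ s → ∀ σ : Set Y, (∀ u ∈ σ, ∀ v ∈ σ, dist u v ≤ s) →
      ∀ u ∈ σ ∪ i '' (θ '' σ), ∀ v ∈ σ ∪ i '' (θ '' σ),
        dist u v ≤ m * (s + 2 * r) :=
  rips_lower_triangle_homotopy_general i m hm1 r θ hθr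
end

section
/- (Theorem 9, componentwise stability.) Let X ⊆ Y be finite sets with compatible neighbourhood systems: N_x ⊆ X \ {x} with weights d_x(x,z) ∈ (0,∞), N'_y ⊆ Y \ {y} with weights d'_y(y,z) ∈ (0,∞), N_x ⊆ N'_x and d'_x(x,z) ≤ d_x(x,z) for all x ∈ X, z ∈ N_x. Let D and D' be the UMAP ep-metrics on X and Y. Let E be a global connected component of (X,D) and F a global connected component of (Y,D') with E ⊆ F. Let m ≥ 1 be a real number with D(u,v) ≤ m · D'(u,v) for all u, v ∈ E, and let r > 0 be such that for every y ∈ F there is an x ∈ E with D'(y,x) < r. Then there exists θ : F → E with θ(x) = x for all x ∈ E such that for every s ∈ [0,∞): (i) every σ ⊆ E with pairwise D-distances ≤ s has pairwise D'-distances ≤ s; (ii) every σ ⊆ F with pairwise D'-distances ≤ s has θ(σ) with pairwise D-distances ≤ m·(s+2r); (iii) for every σ ⊆ F with pairwise D'-distances ≤ s, the set σ ∪ θ(σ) has pairwise D'-distances ≤ m·(s+2r); and (iv) θ(σ) = σ for every σ ⊆ E. Hence the interleaving diagram of Rips posets P_s(E,D) → P_s(F,D') → P_{m(s+2r)}(E,D)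 → P_{m(s+2r)}(F,D') commutes (the upper triangle strictly, the lower triangle up to the homotopy given by the inclusions σ ⊆ σ ∪ θ(σ) ⊇ θ(σ), rel P_s(E,D)). -/
/-!
A star metric `D_z` of `X` is pointwise at least the star metric `D'_{i z}` of `Y` (neighbours
are kept and weights only decrease), so pushing chains forward along `i` shows that `i` is
`1`-Lipschitz from `D` to `D'`. The retraction `θ` fixes `i(E)` and sends every other point of `F`
to a point of `E` whose image is `r`-close. Then every point of `σ ∪ i(θ(σ))` is `r`-close to a
point of `σ`, so this set has `D'`-diameter at most `s + 2r`, and the compression factor `m`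
turns that into the bound `m(s + 2r)` for `D` on `θ(σ) ⊆ E`.
-/

open scoped ENNReal NNReal

open Classical in
/-- The ep-metric `D_z` on `X` determined by a centre `z`, its set of
neighbours `N z` and weights `w z -`:  `D_z(u,u) = 0`;
`D_z(z,y) = D_z(y,z) = w z y` for `y ∈ N z`;
`D_z(y,y') = w z y + w z y'` for distinct `y, y' ∈ N z`; and
`D_z(u,v) = ∞` for all other pairs `u ≠ v`. -/
noncomputable def starDist {X : Type*} (N : X → Set X) (w : X → X → ℝ≥0∞)
    (z : X) : X → X → ℝ≥0∞ := fun u v =>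
  if u = v then 0
  else if u = z ∧ v ∈ N z then w z v
  else if v = z ∧ u ∈ N z then w z u
  else if u ∈ N z ∧ v ∈ N z then w z u + w z v
  else ⊤

/-- The UMAP ep-metric `D = ∨_{z ∈ X} D_z`, the wedge of the ep-metrics
`D_z` over all centres `z ∈ X`. -/
noncomputable def umapDist {X : Type*} (N : X → Set X) (w : X → X → ℝ≥0∞) :
    X → X → ℝ≥0∞ :=
  wedgeDist (fun z : X => starDist N w z)

/-- `E` is a global connected component of the ep-metric space `(Z,d)`:
it is an equivalence class of the relation `d(u,v) < ∞`. -/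
def IsGlobalComponent {Z : Type*} (d : Z → Z → ℝ≥0∞) (E : Set Z) : Prop :=
  ∃ u : Z, E = {v | d u v < ⊤}

section ChainCosts
variable {X I : Type*} {d : I → X → X → ℝ≥0∞}

lemma zero_mem_chainCosts (d : I → X → X → ℝ≥0∞) (x : X) : 0 ∈ chainCosts d x x :=
  ⟨0, fun _ => x, Fin.elim0, rfl, rfl, by simp⟩

lemma add_mem_chainCosts_cons {x y z : X} {c : ℝ≥0∞} (k : I) (hc : c ∈ chainCosts d y z) :
    d k x y + c ∈ chainCosts d x z := by
  obtain ⟨n, p, ix, rfl, rfl, rfl⟩ := hc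
  refine ⟨n + 1, Fin.cons x p, Fin.cons k ix, rfl, by simp [← Fin.succ_last], ?_⟩
  simp [Fin.sum_univ_succ]

lemma sum_add_mem_chainCosts {z : X} {b : ℝ≥0∞} {n : ℕ} (p : Fin (n + 1) → X) (ix : Fin n → I)
    (hb : b ∈ chainCosts d (p (Fin.last n)) z) :
    (∑ j : Fin n, d (ix j) (p j.castSucc) (p j.succ)) + b ∈ chainCosts d (p 0) z := by
  induction n with
  | zero => simpa using hb
  | succ n ih =>
    rw [Fin.sum_univ_succ, add_assoc (d _ _ _)]
    refine add_mem_chainCosts_cons _ (ih (p ∘ Fin.succ) (ix ∘ Fin.succ) ?_)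
    simpa [Fin.succ_last] using hb

lemma add_mem_chainCosts {x y z : X} {a b : ℝ≥0∞} (ha : a ∈ chainCosts d x y)
    (hb : b ∈ chainCosts d y z) : a + b ∈ chainCosts d x z := by
  obtain ⟨n, p, ix, rfl, rfl, rfl⟩ := ha
  exact sum_add_mem_chainCosts p ix hb

lemma mem_chainCosts_symm (hd : ∀ k a b, d k a b = d k b a) {x y : X} {c : ℝ≥0∞}
    (hc : c ∈ chainCosts d x y) : c ∈ chainCosts d y x := by
  obtain ⟨n, p, ix, rfl, rfl, rfl⟩ := hc
  refine ⟨n, p ∘ Fin.rev, ix ∘ Fin.rev, by simp, by simp, ?_⟩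
  rw [← Equiv.sum_comp Fin.revPerm]
  refine Finset.sum_congr rfl fun j _ => ?_
  simpa [Fin.rev_castSucc, Fin.rev_succ] using hd _ _ _

end ChainCosts

section Wedge
variable {X I : Type*}

theorem isEPMetric_wedgeDist {d : I → X → X → ℝ≥0∞} (hd : ∀ k a b, d k a b = d k b a) :
    IsEPMetric (wedgeDist d) where
  refl x := le_antisymm (sInf_le (zero_mem_chainCosts d x)) bot_le
  symm x y := le_antisymm (sInf_le_sInf fun _ => mem_chainCosts_symm hd)
    (sInf_le_sInf fun _ => mem_chainCosts_symm hd)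
  triangle x y z := by
    simp only [wedgeDist, ENNReal.sInf_add, ENNReal.add_sInf]
    exact le_iInf₂ fun b hb => le_iInf₂ fun a ha => sInf_le (add_mem_chainCosts ha hb)

theorem wedgeDist_map_le {Y J : Type*} {d : I → X → X → ℝ≥0∞} {d' : J → Y → Y → ℝ≥0∞}
    (f : X → Y) (g : I → J) (hfg : ∀ k a b, d' (g k) (f a) (f b) ≤ d k a b) (x y : X) :
    wedgeDist d' (f x) (f y) ≤ wedgeDist d x y := by
  refine le_sInf ?_
  rintro _ ⟨n, p, ix, rfl, rfl, rfl⟩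
  have hmap : _ ∈ chainCosts d' (f (p 0)) (f (p (Fin.last n))) :=
    ⟨n, f ∘ p, g ∘ ix, rfl, rfl, rfl⟩
  exact (sInf_le hmap).trans (Finset.sum_le_sum fun j _ => hfg _ _ _)

end Wedge

section Star
variable {X Y : Type*}

lemma starDist_comm (N : X → Set X) (w : X → X → ℝ≥0∞) (z u v : X) :
    starDist N w z u v = starDist N w z v u := by
  unfold starDist
  split_ifs <;> simp_all [add_comm]

lemma starDist_map_le {i : X → Y}
    {NX : X → Set X} {wX : X → X → ℝ≥0∞} {NY : Y → Set Y} {wY : Y → Y → ℝ≥0∞}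
    (hsub : ∀ x z, z ∈ NX x → i z ∈ NY (i x))
    (hcomp : ∀ x z, z ∈ NX x → wY (i x) (i z) ≤ wX x z) (z a b : X) :
    starDist NY wY (i z) (i a) (i b) ≤ starDist NX wX z a b := by
  unfold starDist
  split_ifs <;> simp_all [add_le_add, le_add_right, le_add_left]

end Star

section Umap
variable {X Y : Type*}

theorem isEPMetric_umapDist (N : X → Set X) (w : X → X → ℝ≥0∞) : IsEPMetric (umapDist N w) :=
  isEPMetric_wedgeDist (starDist_comm N w)

theorem umapDist_map_le {i : X → Y}
    {NX : X → Set X} {wX : X → X → ℝ≥0∞} {NY : Y → Set Y} {wY : Y → Y → ℝ≥0∞}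
    (hsub : ∀ x z, z ∈ NX x → i z ∈ NY (i x))
    (hcomp : ∀ x z, z ∈ NX x → wY (i x) (i z) ≤ wX x z) (u v : X) :
    umapDist NY wY (i u) (i v) ≤ umapDist NX wX u v :=
  wedgeDist_map_le i i (starDist_map_le hsub hcomp) u v

end Umap

/-- `σ ∈ P_s(Z,d)`. -/
def IsRipsSimplex {Z : Type*} (d : Z → Z → ℝ≥0∞) (s : ℝ≥0∞) (σ : Set Z) : Prop :=
  ∀ u ∈ σ, ∀ v ∈ σ, d u v ≤ s

namespace IsRipsSimplex
variable {Z : Type*} {d : Z → Z → ℝ≥0∞} {s t : ℝ≥0∞} {σ τ : Set Z}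

theorem mono (hσ : IsRipsSimplex d s σ) (hst : s ≤ t) : IsRipsSimplex d t σ :=
  fun u hu v hv => (hσ u hu v hv).trans hst

theorem anti (hσ : IsRipsSimplex d s σ) (hτ : τ ⊆ σ) : IsRipsSimplex d s τ :=
  fun u hu v hv => hσ u (hτ hu) v (hτ hv)

theorem image {W : Type*} {d' : W → W → ℝ≥0∞} {f : Z → W}
    (hf : ∀ u v, d' (f u) (f v) ≤ d u v) (hσ : IsRipsSimplex d s σ) :
    IsRipsSimplex d' s (f '' σ) := by
  rintro _ ⟨u, hu, rfl⟩ _ ⟨v, hv, rfl⟩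
  exact (hf u v).trans (hσ u hu v hv)

theorem of_image {W : Type*} {d' : W → W → ℝ≥0∞} {f : Z → W} {E : Set Z} {m : ℝ≥0∞}
    (hm : ∀ u ∈ E, ∀ v ∈ E, d u v ≤ m * d' (f u) (f v)) (hσE : σ ⊆ E)
    (hσ : IsRipsSimplex d' t (f '' σ)) : IsRipsSimplex d (m * t) σ :=
  fun u hu v hv => (hm u (hσE hu) v (hσE hv)).trans
    (mul_le_mul_right (hσ _ (Set.mem_image_of_mem f hu) _ (Set.mem_image_of_mem f hv)) m)

theorem union_image (hd : IsEPMetric d) {g : Z → Z} {r : ℝ≥0∞}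
    (hg : ∀ z ∈ σ, d z (g z) ≤ r) (hσ : IsRipsSimplex d s σ) :
    IsRipsSimplex d (s + 2 * r) (σ ∪ g '' σ) := by
  -- every point of `σ ∪ g '' σ` is `r`-close to `σ`, which costs `r` at each end
  have hnear : ∀ u ∈ σ ∪ g '' σ, ∃ a ∈ σ, d u a ≤ r := by
    rintro u (hu | ⟨a, ha, rfl⟩)
    · exact ⟨u, hu, by simp [hd.refl]⟩
    · exact ⟨a, ha, hd.symm (g a) a ▸ hg a ha⟩
  intro u hu v hv
  obtain ⟨a, ha, hua⟩ := hnear u hu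
  obtain ⟨b, hb, hvb⟩ := hnear v hv
  calc d u v ≤ d u a + d a b + d b v := (hd.triangle u b v).trans
        (add_le_add (hd.triangle u a b) le_rfl)
    _ ≤ r + s + r := by gcongr; exacts [hσ a ha b hb, hd.symm v b ▸ hvb]
    _ = s + 2 * r := by ring

end IsRipsSimplex

section Retraction
variable {X Y : Type*} (i : X → Y) (E : Set X) (D' : Y → Y → ℝ≥0∞) (r : ℝ≥0∞) (x₀ : X)

open Classical in
noncomputable def nearRetraction (y : Y) : X :=
  if h : ∃ x ∈ E, i x = y then h.choose
  else if h' : ∃ x ∈ E, D' y (i x) < r then h'.choose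
  else x₀

variable {i E D' r x₀}

theorem leftInvOn_nearRetraction (hi : Function.Injective i) :
    Set.LeftInvOn (nearRetraction i E D' r x₀) i E := fun x hx => by
  have h : ∃ x' ∈ E, i x' = i x := ⟨x, hx, rfl⟩
  rw [nearRetraction, dif_pos h]
  exact hi h.choose_spec.2

theorem nearRetraction_spec (hD' : ∀ y, D' y y = 0) {y : Y} (hy : ∃ x ∈ E, D' y (i x) < r) :
    nearRetraction i E D' r x₀ y ∈ E ∧ D' y (i (nearRetraction i E D' r x₀ y)) < r := by
  by_cases h : ∃ x ∈ E, i x = y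
  · rw [nearRetraction, dif_pos h, h.choose_spec.2, hD']
    exact ⟨h.choose_spec.1, hy.elim fun _ hx => zero_le.trans_lt hx.2⟩
  · rw [nearRetraction, dif_neg h, dif_pos hy]
    exact hy.choose_spec

end Retraction

theorem umap_componentwise_stability_general {X Y : Type*}
    (i : X → Y) (hi : Function.Injective i)
    (NX : X → Set X) (wX : X → X → ℝ≥0∞)
    (NY : Y → Set Y) (wY : Y → Y → ℝ≥0∞)
    (hsub : ∀ x z, z ∈ NX x → i z ∈ NY (i x))
    (hcomp : ∀ x z, z ∈ NX x → wY (i x) (i z) ≤ wX x z)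
    (E : Set X) (hE : IsGlobalComponent (umapDist NX wX) E)
    (F : Set Y)
    (m : ℝ≥0) (hm1 : 1 ≤ m)
    (hm : ∀ u ∈ E, ∀ v ∈ E,
      umapDist NX wX u v ≤ (m : ℝ≥0∞) * umapDist NY wY (i u) (i v))
    (r : ℝ≥0)
    (hnear : ∀ y ∈ F, ∃ x ∈ E, umapDist NY wY y (i x) < (r : ℝ≥0∞)) :
    ∃ θ : Y → X, (∀ y ∈ F, θ y ∈ E) ∧ (∀ x ∈ E, θ (i x) = x) ∧
      ∀ s : ℝ≥0,
        -- (i) `i` induces `P_s(E,D) → P_s(F,D')`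
        (∀ σ : Set X, σ ⊆ E →
          (∀ u ∈ σ, ∀ v ∈ σ, umapDist NX wX u v ≤ (s : ℝ≥0∞)) →
          ∀ u ∈ i '' σ, ∀ v ∈ i '' σ, umapDist NY wY u v ≤ (s : ℝ≥0∞)) ∧
        -- (ii) `θ` induces `P_s(F,D') → P_{m(s+2r)}(E,D)`
        (∀ σ : Set Y, σ ⊆ F →
          (∀ u ∈ σ, ∀ v ∈ σ, umapDist NY wY u v ≤ (s : ℝ≥0∞)) →
          ∀ u ∈ θ '' σ, ∀ v ∈ θ '' σ,
            umapDist NX wX u v ≤ (m : ℝ≥0∞) * ((s : ℝ≥0∞) + 2 * (r : ℝ≥0∞))) ∧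
        -- (iii) lower-triangle homotopy: `σ ∪ i(θ(σ)) ∈ P_{m(s+2r)}(F,D')`
        (∀ σ : Set Y, σ ⊆ F →
          (∀ u ∈ σ, ∀ v ∈ σ, umapDist NY wY u v ≤ (s : ℝ≥0∞)) →
          ∀ u ∈ σ ∪ i '' (θ '' σ), ∀ v ∈ σ ∪ i '' (θ '' σ),
            umapDist NY wY u v ≤ (m : ℝ≥0∞) * ((s : ℝ≥0∞) + 2 * (r : ℝ≥0∞))) ∧
        -- (iv) upper triangle: `θ(i(σ)) = σ` for `σ ⊆ E`
        (∀ σ : Set X, σ ⊆ E → θ '' (i '' σ) = σ) := by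
  obtain ⟨x₀, -⟩ := hE
  have hD' := isEPMetric_umapDist NY wY
  set θ := nearRetraction i E (umapDist NY wY) r x₀
  have hθF : ∀ y ∈ F, θ y ∈ E ∧ umapDist NY wY y (i (θ y)) < r :=
    fun y hy => nearRetraction_spec hD'.refl (hnear y hy)
  have hθi : Set.LeftInvOn θ i E := leftInvOn_nearRetraction hi
  refine ⟨θ, fun y hy => (hθF y hy).1, hθi, fun s => ?_⟩
  have hU : ∀ σ ⊆ F, IsRipsSimplex (umapDist NY wY) s σ →
      IsRipsSimplex (umapDist NY wY) (s + 2 * r) (σ ∪ i '' (θ '' σ)) := fun σ hσF hσ => by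
    rw [Set.image_image]
    exact hσ.union_image hD' fun y hy => (hθF y (hσF hy)).2.le
  refine ⟨?_, ?_, ?_, ?_⟩
  · exact fun σ _ hσ => IsRipsSimplex.image (umapDist_map_le hsub hcomp) hσ
  · intro σ hσF hσ
    refine IsRipsSimplex.of_image hm ?_ ((hU σ hσF hσ).anti Set.subset_union_right)
    exact Set.image_subset_iff.2 fun y hy => (hθF y (hσF hy)).1
  · exact fun σ hσF hσ => (hU σ hσF hσ).mono (le_mul_of_one_le_left' (by exact_mod_cast hm1))
  · exact fun σ hσE => hθi.image_image' hσE

/-- Theorem 9, componentwise stability: given an inclusion `i : X ⊆ Y` of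
finite sets with compatible neighbourhood systems, UMAP ep-metrics `D`, `D'`,
global connected components `E ⊆ X` and `F ⊆ Y` with `i(E) ⊆ F`, a
compression factor `m ≥ 1` with `D(u,v) ≤ m·D'(i u, i v)` on `E`, and `r > 0`
such that every point of `F` is within `D'`-distance `< r` of a point of
`i(E)`, there is a retraction `θ : F → E` giving a homotopy interleaving of
Rips posets: (i) `P_s(E,D) → P_s(F,D')` is induced by `i`; (ii) `θ` induces
`P_s(F,D') → P_{m(s+2r)}(E,D)`; (iii) the inclusions
`σ ⊆ σ ∪ i(θ(σ)) ⊇ i(θ(σ))` live in `P_{m(s+2r)}(F,D')` (lower-triangle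
homotopy); and (iv) `θ(σ) = σ` for `σ ⊆ E` (upper triangle). -/
theorem umap_componentwise_stability {X Y : Type*} [Finite X] [Finite Y]
    (i : X → Y) (hi : Function.Injective i)
    (NX : X → Set X) (wX : X → X → ℝ≥0∞) (hNX : ∀ x, x ∉ NX x)
    (hwX : ∀ x z, z ∈ NX x → 0 < wX x z ∧ wX x z < ⊤)
    (NY : Y → Set Y) (wY : Y → Y → ℝ≥0∞) (hNY : ∀ y, y ∉ NY y)
    (hwY : ∀ y z, z ∈ NY y → 0 < wY y z ∧ wY y z < ⊤)
    (hsub : ∀ x z, z ∈ NX x → i z ∈ NY (i x))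
    (hcomp : ∀ x z, z ∈ NX x → wY (i x) (i z) ≤ wX x z)
    (E : Set X) (hE : IsGlobalComponent (umapDist NX wX) E)
    (F : Set Y) (hF : IsGlobalComponent (umapDist NY wY) F)
    (hEF : i '' E ⊆ F)
    (m : ℝ≥0) (hm1 : 1 ≤ m)
    (hm : ∀ u ∈ E, ∀ v ∈ E,
      umapDist NX wX u v ≤ (m : ℝ≥0∞) * umapDist NY wY (i u) (i v))
    (r : ℝ≥0) (hr : 0 < r)
    (hnear : ∀ y ∈ F, ∃ x ∈ E, umapDist NY wY y (i x) < (r : ℝ≥0∞)) :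
    ∃ θ : Y → X, (∀ y ∈ F, θ y ∈ E) ∧ (∀ x ∈ E, θ (i x) = x) ∧
      ∀ s : ℝ≥0,
        -- (i) `i` induces `P_s(E,D) → P_s(F,D')`
        (∀ σ : Set X, σ ⊆ E →
          (∀ u ∈ σ, ∀ v ∈ σ, umapDist NX wX u v ≤ (s : ℝ≥0∞)) →
          ∀ u ∈ i '' σ, ∀ v ∈ i '' σ, umapDist NY wY u v ≤ (s : ℝ≥0∞)) ∧
        -- (ii) `θ` induces `P_s(F,D') → P_{m(s+2r)}(E,D)`
        (∀ σ : Set Y, σ ⊆ F →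
          (∀ u ∈ σ, ∀ v ∈ σ, umapDist NY wY u v ≤ (s : ℝ≥0∞)) →
          ∀ u ∈ θ '' σ, ∀ v ∈ θ '' σ,
            umapDist NX wX u v ≤ (m : ℝ≥0∞) * ((s : ℝ≥0∞) + 2 * (r : ℝ≥0∞))) ∧
        -- (iii) lower-triangle homotopy: `σ ∪ i(θ(σ)) ∈ P_{m(s+2r)}(F,D')`
        (∀ σ : Set Y, σ ⊆ F →
          (∀ u ∈ σ, ∀ v ∈ σ, umapDist NY wY u v ≤ (s : ℝ≥0∞)) →
          ∀ u ∈ σ ∪ i '' (θ '' σ), ∀ v ∈ σ ∪ i '' (θ '' σ),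
            umapDist NY wY u v ≤ (m : ℝ≥0∞) * ((s : ℝ≥0∞) + 2 * (r : ℝ≥0∞))) ∧
        -- (iv) upper triangle: `θ(i(σ)) = σ` for `σ ⊆ E`
        (∀ σ : Set X, σ ⊆ E → θ '' (i '' σ) = σ) :=
  umap_componentwise_stability_general i hi NX wX NY wY hsub hcomp E hE F m hm1 hm r hnear
end
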